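/- arXiv:2605.23798 — 5 statements merged into one kernel-verified Lean document; each statement's English description precedes it below -/
import Mathlib

section
/- Let n ≥ 1 and let G be a subgroup of SL(n,ℂ). Then G is Zariski dense in SL(n,ℂ) if and only if its commutator subgroup [G,G] is Zariski dense in SL(n,ℂ). -/
open Matrix

noncomputable section

/-- Zariski density of a subgroup of `SL(n, ℂ)`: every polynomial in the `n²` matrix
entries that vanishes on `G` vanishes on all of `SL(n, ℂ)`. -/
def IsZariskiDense {n : ℕ} (G : Subgroup (Matrix.SpecialLinearGroup (Fin n) ℂ)) : Prop :=
  ∀ p : MvPolynomial (Fin n × Fin n) ℂ,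
    (∀ g ∈ G, MvPolynomial.eval (fun q => (g : Matrix (Fin n) (Fin n) ℂ) q.1 q.2) p = 0) →
    ∀ g : Matrix.SpecialLinearGroup (Fin n) ℂ,
      MvPolynomial.eval (fun q => (g : Matrix (Fin n) (Fin n) ℂ) q.1 q.2) p = 0

namespace ZDAux


variable {n : ℕ}

local notation "SL" => Matrix.SpecialLinearGroup (Fin n) ℂ

/-- evaluation point of a special linear matrix -/
def ev (g : SL) : Fin n × Fin n → ℂ := fun q => (g : Matrix (Fin n) (Fin n) ℂ) q.1 q.2

/-- the matrix of variables -/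
def Xm (n : ℕ) : Matrix (Fin n) (Fin n) (MvPolynomial (Fin n × Fin n) ℂ) :=
  Matrix.of fun i j => MvPolynomial.X (i, j)

/-- constant matrix -/
def Cm (b : Matrix (Fin n) (Fin n) ℂ) : Matrix (Fin n) (Fin n) (MvPolynomial (Fin n × Fin n) ℂ) :=
  b.map MvPolynomial.C

lemma eval_bind₁ (g : Fin n × Fin n → ℂ) (h : Fin n × Fin n → MvPolynomial (Fin n × Fin n) ℂ)
    (p : MvPolynomial (Fin n × Fin n) ℂ) :
    MvPolynomial.eval g (MvPolynomial.bind₁ h p)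
      = MvPolynomial.eval (fun i => MvPolynomial.eval g (h i)) p := by
  exact MvPolynomial.eval₂Hom_bind₁ (RingHom.id ℂ) g h p

lemma eval_bind₁_mat (g : SL) (F : Matrix (Fin n) (Fin n) (MvPolynomial (Fin n × Fin n) ℂ))
    (p : MvPolynomial (Fin n × Fin n) ℂ) :
    MvPolynomial.eval (ev g) (MvPolynomial.bind₁ (fun q => F q.1 q.2) p)
      = MvPolynomial.eval (fun q : Fin n × Fin n =>
          (F.map (MvPolynomial.eval (ev g))) q.1 q.2) p := by
  rw [eval_bind₁]; rfl

lemma map_Xm (g : SL) :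
    (Xm n).map (MvPolynomial.eval (ev g)) = (g : Matrix (Fin n) (Fin n) ℂ) := by
  ext i j
  simp [Xm, ev]

lemma map_Cm (g : SL) (b : Matrix (Fin n) (Fin n) ℂ) :
    (Cm b).map (MvPolynomial.eval (ev g)) = b := by
  ext i j
  simp [Cm]

lemma map_adj_Xm (g : SL) :
    ((Xm n).adjugate).map (MvPolynomial.eval (ev g))
      = ((g⁻¹ : SL) : Matrix (Fin n) (Fin n) ℂ) := by
  have := (MvPolynomial.eval (ev g)).map_adjugate (Xm n)
  rw [Matrix.SpecialLinearGroup.coe_inv]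
  simp only [RingHom.mapMatrix_apply] at this
  rw [this, map_Xm]



/-- The "Zariski closure" of the commutator subgroup: elements where every polynomial
vanishing on `⁅G,G⁆` vanishes. -/
def Zs (G : Subgroup (Matrix.SpecialLinearGroup (Fin n) ℂ)) : Set (Matrix.SpecialLinearGroup (Fin n) ℂ) :=
  {g | ∀ p : MvPolynomial (Fin n × Fin n) ℂ,
    (∀ h ∈ ⁅G, G⁆, MvPolynomial.eval (ev h) p = 0) → MvPolynomial.eval (ev g) p = 0}

lemma mem_Zs_of_mem {G : Subgroup (Matrix.SpecialLinearGroup (Fin n) ℂ)} {h : SL}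
    (hh : h ∈ ⁅G, G⁆) : h ∈ Zs G := fun p hp => hp h hh

/-- left multiplication by an element of the commutator subgroup preserves `Zs`. -/
lemma left_mul_Zs {G : Subgroup (Matrix.SpecialLinearGroup (Fin n) ℂ)} {h y : SL}
    (hh : h ∈ ⁅G, G⁆) (hy : y ∈ Zs G) : h * y ∈ Zs G := by
  intro p hp
  set q := MvPolynomial.bind₁
      (fun ij : Fin n × Fin n => (Cm (h : Matrix (Fin n) (Fin n) ℂ) * Xm n) ij.1 ij.2) p with hq
  have key : ∀ g : SL, MvPolynomial.eval (ev g) q = MvPolynomial.eval (ev (h * g)) p := by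
    intro g
    rw [hq, eval_bind₁_mat, Matrix.map_mul, map_Cm, map_Xm]
    rfl
  have hqv : ∀ g ∈ ⁅G, G⁆, MvPolynomial.eval (ev g) q = 0 := by
    intro g hg
    rw [key]
    exact hp _ (mul_mem hh hg)
  have := hy q hqv
  rwa [key] at this

lemma mul_Zs {G : Subgroup (Matrix.SpecialLinearGroup (Fin n) ℂ)} {x y : SL}
    (hx : x ∈ Zs G) (hy : y ∈ Zs G) : x * y ∈ Zs G := by
  intro p hp
  set q := MvPolynomial.bind₁
      (fun ij : Fin n × Fin n => (Xm n * Cm (y : Matrix (Fin n) (Fin n) ℂ)) ij.1 ij.2) p with hq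
  have key : ∀ g : SL, MvPolynomial.eval (ev g) q = MvPolynomial.eval (ev (g * y)) p := by
    intro g
    rw [hq, eval_bind₁_mat, Matrix.map_mul, map_Cm, map_Xm]
    rfl
  have hqv : ∀ g ∈ ⁅G, G⁆, MvPolynomial.eval (ev g) q = 0 := by
    intro g hg
    rw [key]
    exact left_mul_Zs hg hy p hp
  have := hx q hqv
  rwa [key] at this

/-- density: all commutators of `SL` lie in `Zs G`. -/
lemma comm_mem_Zs {G : Subgroup (Matrix.SpecialLinearGroup (Fin n) ℂ)} (hG : _root_.IsZariskiDense G)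
    (a b : SL) : a * b * a⁻¹ * b⁻¹ ∈ Zs G := by
  intro p hp
  -- step A : for b' in G, all a' in SL
  have stepA : ∀ b' : SL, b' ∈ G → ∀ a' : SL,
      MvPolynomial.eval (ev (a' * b' * a'⁻¹ * b'⁻¹)) p = 0 := by
    intro b' hb'
    set q := MvPolynomial.bind₁
        (fun ij : Fin n × Fin n =>
          (Xm n * Cm (b' : Matrix (Fin n) (Fin n) ℂ) * (Xm n).adjugate
            * Cm ((b'⁻¹ : SL) : Matrix (Fin n) (Fin n) ℂ)) ij.1 ij.2) p with hqdef
    have key : ∀ a' : SL, MvPolynomial.eval (ev a') q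
        = MvPolynomial.eval (ev (a' * b' * a'⁻¹ * b'⁻¹)) p := by
      intro a'
      rw [hqdef, eval_bind₁_mat, Matrix.map_mul, Matrix.map_mul, Matrix.map_mul,
        map_Cm, map_Cm, map_Xm, map_adj_Xm]
      rfl
    intro a'
    rw [← key]
    refine hG q ?_ a'
    intro g hg
    have hmem : g * b' * g⁻¹ * b'⁻¹ ∈ ⁅G, G⁆ := by
      have := Subgroup.commutator_mem_commutator hg hb'
      rwa [commutatorElement_def] at this
    have h0 : MvPolynomial.eval (ev g) q = 0 := by rw [key]; exact hp _ hmem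
    exact h0
  -- step B : fix a in SL, vary b
  set r := MvPolynomial.bind₁
      (fun ij : Fin n × Fin n =>
        (Cm (a : Matrix (Fin n) (Fin n) ℂ) * Xm n
          * Cm ((a⁻¹ : SL) : Matrix (Fin n) (Fin n) ℂ) * (Xm n).adjugate) ij.1 ij.2) p with hrdef
  have key : ∀ b' : SL, MvPolynomial.eval (ev b') r
      = MvPolynomial.eval (ev (a * b' * a⁻¹ * b'⁻¹)) p := by
    intro b'
    rw [hrdef, eval_bind₁_mat, Matrix.map_mul, Matrix.map_mul, Matrix.map_mul,
      map_Cm, map_Cm, map_Xm, map_adj_Xm]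
    rfl
  rw [← key]
  refine hG r ?_ b
  intro g hg
  have h0 : MvPolynomial.eval (ev g) r = 0 := by rw [key]; exact stepA g hg a
  exact h0



/-- every diagonal matrix of determinant 1 is a commutator in `SL(m+1, ℂ)`. -/
lemma diag_eq_commutator (m : ℕ) (d : Fin (m + 1) → ℂ) (hd : ∏ i, d i = 1) :
    ∃ A B : Matrix.SpecialLinearGroup (Fin (m + 1)) ℂ,
      Matrix.diagonal d = ↑(A * B * A⁻¹ * B⁻¹) := by
  classical
  have hdne : ∀ i, d i ≠ 0 := by
    intro i hi
    rw [Finset.prod_eq_zero (Finset.mem_univ i) hi] at hd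
    exact one_ne_zero hd.symm
  set d' : ℕ → ℂ := fun k => if h : k < m + 1 then d ⟨k, h⟩ else 1 with hd'
  have hd'ne : ∀ k, d' k ≠ 0 := by
    intro k
    rw [hd']
    dsimp only
    split
    · exact hdne _
    · exact one_ne_zero
  set e : Fin (m + 1) → ℂ := fun i => ∏ k ∈ Finset.range i.val, d' k with he
  have hene : ∀ i, e i ≠ 0 := fun i => Finset.prod_ne_zero_iff.mpr fun k _ => hd'ne k
  set σ : Equiv.Perm (Fin (m + 1)) := finRotate (m + 1) with hσ
  have key : ∀ i, e (σ i) = d i * e i := by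
    intro i
    rw [hσ]
    rw [finRotate_succ_apply]
    rcases eq_or_ne i (Fin.last m) with h | h
    · subst h
      rw [Fin.last_add_one]
      have h1 : e 0 = 1 := by simp [he]
      have h2 : d (Fin.last m) * e (Fin.last m) = ∏ k ∈ Finset.range (m + 1), d' k := by
        rw [Finset.prod_range_succ, he]
        dsimp only
        rw [mul_comm]
        congr 1
        rw [hd']
        simp [Fin.last]
      have h3 : ∏ k ∈ Finset.range (m + 1), d' k = 1 := by
        rw [← Fin.prod_univ_eq_prod_range d' (m + 1), ← hd]
        apply Finset.prod_congr rfl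
        intro i _
        rw [hd']
        simp [i.isLt]
      rw [h1, h2, h3]
    · have hlt : i < Fin.last m := lt_of_le_of_ne (Fin.le_last i) h
      have hv : ((i + 1 : Fin (m + 1)) : ℕ) = (i : ℕ) + 1 := Fin.val_add_one_of_lt hlt
      rw [he]
      dsimp only
      rw [hv, Finset.prod_range_succ, mul_comm]
      congr 1
      rw [hd']
      simp [i.isLt]
  -- the permutation matrix and its scaling into SL
  set P : Matrix (Fin (m + 1)) (Fin (m + 1)) ℂ := σ.permMatrix ℂ with hP
  set Pinv : Matrix (Fin (m + 1)) (Fin (m + 1)) ℂ := (σ⁻¹).permMatrix ℂ with hPinv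
  have hPP : P * Pinv = 1 := by
    rw [hP, hPinv]
    show σ.toPEquiv.toMatrix * (σ⁻¹).toPEquiv.toMatrix = 1
    rw [← PEquiv.toMatrix_trans, ← Equiv.toPEquiv_trans]
    have : σ.trans σ⁻¹ = Equiv.refl _ := Equiv.self_trans_symm σ
    rw [this, Equiv.toPEquiv_refl, PEquiv.toMatrix_refl]
  have hdetP : Matrix.det P ≠ 0 := by
    rw [hP, Matrix.det_permutation]
    rcases Int.units_eq_one_or (Equiv.Perm.sign σ) with h | h <;> simp [h]
  obtain ⟨a, ha⟩ := IsAlgClosed.exists_pow_nat_eq (k := ℂ) (Matrix.det P)⁻¹ (Nat.succ_pos m)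
  have ha0 : a ≠ 0 := by
    intro h0
    apply inv_ne_zero hdetP
    rw [← ha, h0, zero_pow (Nat.succ_ne_zero m)]
  have hdetA : Matrix.det (a • P) = 1 := by
    rw [Matrix.det_smul, Fintype.card_fin, ha, inv_mul_cancel₀ hdetP]
  -- the diagonal matrix and its scaling into SL
  set E : Matrix (Fin (m + 1)) (Fin (m + 1)) ℂ := Matrix.diagonal e with hE
  set Einv : Matrix (Fin (m + 1)) (Fin (m + 1)) ℂ := Matrix.diagonal (fun i => (e i)⁻¹) with hEinv
  have hEE : E * Einv = 1 := by
    rw [hE, hEinv, Matrix.diagonal_mul_diagonal]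
    rw [show (fun i => e i * (e i)⁻¹) = fun _ => (1 : ℂ) from funext fun i => mul_inv_cancel₀ (hene i)]
    exact Matrix.diagonal_one
  have hdetE : Matrix.det E ≠ 0 := by
    rw [hE, Matrix.det_diagonal]
    exact Finset.prod_ne_zero_iff.mpr fun i _ => hene i
  obtain ⟨b, hb⟩ := IsAlgClosed.exists_pow_nat_eq (k := ℂ) (Matrix.det E)⁻¹ (Nat.succ_pos m)
  have hb0 : b ≠ 0 := by
    intro h0
    apply inv_ne_zero hdetE
    rw [← hb, h0, zero_pow (Nat.succ_ne_zero m)]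
  have hdetB : Matrix.det (b • E) = 1 := by
    rw [Matrix.det_smul, Fintype.card_fin, hb, inv_mul_cancel₀ hdetE]
  set A : Matrix.SpecialLinearGroup (Fin (m + 1)) ℂ := ⟨a • P, hdetA⟩ with hA
  set B : Matrix.SpecialLinearGroup (Fin (m + 1)) ℂ := ⟨b • E, hdetB⟩ with hB
  -- inverses
  have hAA' : (a • P) * (a⁻¹ • Pinv) = 1 := by
    rw [Matrix.smul_mul, Matrix.mul_smul, smul_smul, hPP, mul_inv_cancel₀ ha0, one_smul]
  have hdetA' : Matrix.det (a⁻¹ • Pinv) = 1 := by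
    have := congrArg Matrix.det hAA'
    rw [Matrix.det_mul, hdetA, one_mul, Matrix.det_one] at this
    exact this
  have hBB' : (b • E) * (b⁻¹ • Einv) = 1 := by
    rw [Matrix.smul_mul, Matrix.mul_smul, smul_smul, hEE, mul_inv_cancel₀ hb0, one_smul]
  have hdetB' : Matrix.det (b⁻¹ • Einv) = 1 := by
    have := congrArg Matrix.det hBB'
    rw [Matrix.det_mul, hdetB, one_mul, Matrix.det_one] at this
    exact this
  have hAinv : A⁻¹ = ⟨a⁻¹ • Pinv, hdetA'⟩ := by
    apply inv_eq_of_mul_eq_one_right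
    apply Subtype.ext
    show (a • P) * (a⁻¹ • Pinv) = (1 : Matrix (Fin (m + 1)) (Fin (m + 1)) ℂ)
    exact hAA'
  have hBinv : B⁻¹ = ⟨b⁻¹ • Einv, hdetB'⟩ := by
    apply inv_eq_of_mul_eq_one_right
    apply Subtype.ext
    show (b • E) * (b⁻¹ • Einv) = (1 : Matrix (Fin (m + 1)) (Fin (m + 1)) ℂ)
    exact hBB'
  refine ⟨A, B, ?_⟩
  have hcoe : (↑(A * B * A⁻¹ * B⁻¹) : Matrix (Fin (m + 1)) (Fin (m + 1)) ℂ)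
      = (a • P) * (b • E) * (a⁻¹ • Pinv) * (b⁻¹ • Einv) := by
    rw [hAinv, hBinv]
    rfl
  rw [hcoe]
  have hscal : (a • P) * (b • E) * (a⁻¹ • Pinv) * (b⁻¹ • Einv) = P * E * Pinv * Einv := by
    simp only [Matrix.smul_mul, Matrix.mul_smul, smul_smul]
    rw [show b⁻¹ * (a⁻¹ * (b * a)) = 1 by field_simp, one_smul]
  rw [hscal]
  -- compute P * E * Pinv
  have hPEP : P * E * Pinv = Matrix.diagonal (fun i => e (σ i)) := by
    rw [hP, hPinv]
    show σ.toPEquiv.toMatrix * E * (σ⁻¹).toPEquiv.toMatrix = _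
    rw [PEquiv.toMatrix_toPEquiv_mul, PEquiv.mul_toMatrix_toPEquiv]
    ext i j
    have hsymm : (σ⁻¹).symm = σ := rfl
    simp only [Matrix.submatrix_apply, id_eq, hsymm, hE]
    simp [Matrix.diagonal_apply, EmbeddingLike.apply_eq_iff_eq]
  rw [hPEP, hEinv, Matrix.diagonal_mul_diagonal]
  exact congrArg Matrix.diagonal
    (funext fun i => by rw [key i, mul_inv_cancel_right₀ (hene i)])



lemma transvection_eq_commutator {n : ℕ} (i j : Fin n) (hij : i ≠ j) (c : ℂ) :
    ∃ A B : Matrix.SpecialLinearGroup (Fin n) ℂ,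
      Matrix.transvection i j c = ↑(A * B * A⁻¹ * B⁻¹) := by
  classical
  have hn : 0 < n := i.pos
  set δ : Fin n → ℂ := fun k => if k = i then 2 else 1 with hδ
  have hδne : ∀ k, δ k ≠ 0 := by
    intro k
    rw [hδ]
    dsimp only
    split <;> norm_num
  set D : Matrix (Fin n) (Fin n) ℂ := Matrix.diagonal δ with hD
  set Dinv : Matrix (Fin n) (Fin n) ℂ := Matrix.diagonal (fun k => (δ k)⁻¹) with hDinv
  have hDD : D * Dinv = 1 := by
    rw [hD, hDinv, Matrix.diagonal_mul_diagonal]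
    rw [show (fun k => δ k * (δ k)⁻¹) = fun _ => (1 : ℂ) from
      funext fun k => mul_inv_cancel₀ (hδne k)]
    exact Matrix.diagonal_one
  have hdetD : Matrix.det D ≠ 0 := by
    rw [hD, Matrix.det_diagonal]
    exact Finset.prod_ne_zero_iff.mpr fun k _ => hδne k
  obtain ⟨a, ha⟩ := IsAlgClosed.exists_pow_nat_eq (k := ℂ) (Matrix.det D)⁻¹ hn
  have ha0 : a ≠ 0 := by
    intro h0
    apply inv_ne_zero hdetD
    rw [← ha, h0, zero_pow hn.ne']
  have hdetA : Matrix.det (a • D) = 1 := by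
    rw [Matrix.det_smul, Fintype.card_fin, ha, inv_mul_cancel₀ hdetD]
  set A : Matrix.SpecialLinearGroup (Fin n) ℂ := ⟨a • D, hdetA⟩ with hA
  set B : Matrix.SpecialLinearGroup (Fin n) ℂ :=
    ⟨Matrix.transvection i j c, Matrix.det_transvection_of_ne i j hij c⟩ with hB
  have hAA' : (a • D) * (a⁻¹ • Dinv) = 1 := by
    rw [Matrix.smul_mul, Matrix.mul_smul, smul_smul, hDD, mul_inv_cancel₀ ha0, one_smul]
  have hdetA' : Matrix.det (a⁻¹ • Dinv) = 1 := by
    have := congrArg Matrix.det hAA'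
    rw [Matrix.det_mul, hdetA, one_mul, Matrix.det_one] at this
    exact this
  have hTT : Matrix.transvection i j c * Matrix.transvection i j (-c) = 1 := by
    rw [Matrix.transvection_mul_transvection_same i j hij, add_neg_cancel, Matrix.transvection_zero]
  have hAinv : A⁻¹ = ⟨a⁻¹ • Dinv, hdetA'⟩ := by
    apply inv_eq_of_mul_eq_one_right
    apply Subtype.ext
    show (a • D) * (a⁻¹ • Dinv) = (1 : Matrix (Fin n) (Fin n) ℂ)
    exact hAA'
  have hdetB' : Matrix.det (Matrix.transvection i j (-c)) = 1 :=
    Matrix.det_transvection_of_ne i j hij (-c)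
  have hBinv : B⁻¹ = ⟨Matrix.transvection i j (-c), hdetB'⟩ := by
    apply inv_eq_of_mul_eq_one_right
    apply Subtype.ext
    show Matrix.transvection i j c * Matrix.transvection i j (-c)
      = (1 : Matrix (Fin n) (Fin n) ℂ)
    exact hTT
  refine ⟨A, B, ?_⟩
  have hcoe : (↑(A * B * A⁻¹ * B⁻¹) : Matrix (Fin n) (Fin n) ℂ)
      = (a • D) * Matrix.transvection i j c * (a⁻¹ • Dinv) * Matrix.transvection i j (-c) := by
    rw [hAinv, hBinv]
    rfl
  rw [hcoe]
  have hscal : (a • D) * Matrix.transvection i j c * (a⁻¹ • Dinv) * Matrix.transvection i j (-c)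
      = D * Matrix.transvection i j c * Dinv * Matrix.transvection i j (-c) := by
    simp only [Matrix.smul_mul, Matrix.mul_smul, smul_smul]
    rw [show a⁻¹ * a = 1 from inv_mul_cancel₀ ha0, one_smul]
  rw [hscal]
  have hDTD : D * Matrix.transvection i j c * Dinv = Matrix.transvection i j (2 * c) := by
    ext a' b'
    have h1 : (D * Matrix.transvection i j c * Dinv) a' b'
        = δ a' * Matrix.transvection i j c a' b' * (δ b')⁻¹ := by
      rw [hDinv, Matrix.mul_diagonal, hD, Matrix.diagonal_mul]
    rw [h1]
    simp only [Matrix.transvection, Matrix.add_apply, Matrix.one_apply,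
      Matrix.single, Matrix.of_apply]
    rcases eq_or_ne a' b' with rfl | hab
    · have hstd : ¬(i = a' ∧ j = a') := fun h => hij (h.1.trans h.2.symm)
      rw [if_pos rfl, if_neg hstd, add_zero, if_neg hstd, add_zero, mul_one, mul_inv_cancel₀ (hδne a')]
    · by_cases hstd : i = a' ∧ j = b'
      · obtain ⟨rfl, rfl⟩ := hstd
        rw [if_neg hab, if_pos ⟨rfl, rfl⟩, if_pos ⟨rfl, rfl⟩, zero_add, zero_add]
        have h2 : δ i = 2 := by rw [hδ]; exact if_pos rfl
        have h3 : δ j = 1 := by rw [hδ]; exact if_neg (Ne.symm hij)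
        rw [h2, h3]
        norm_num
      · rw [if_neg hab, if_neg hstd, if_neg hstd]; simp
  rw [hDTD, Matrix.transvection_mul_transvection_same i j hij,
    show (2 * c + -c) = c by ring]


/-- scalar matrices in `SL` lie in `Zs`. -/
lemma scalar_mem_Zs {m : ℕ} {G : Subgroup (Matrix.SpecialLinearGroup (Fin (m + 1)) ℂ)}
    (hG : IsZariskiDense G) (csc : ℂ) (hcsc : csc ^ (m + 1) = 1) :
    ∃ w : Matrix.SpecialLinearGroup (Fin (m + 1)) ℂ,
      (w : Matrix (Fin (m + 1)) (Fin (m + 1)) ℂ) = csc • 1 ∧ w ∈ Zs G := by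
  have hprod : ∏ _i : Fin (m + 1), csc = 1 := by
    rw [Finset.prod_const, Finset.card_univ, Fintype.card_fin, hcsc]
  obtain ⟨A, B, hAB⟩ := diag_eq_commutator m (fun _ => csc) hprod
  refine ⟨A * B * A⁻¹ * B⁻¹, ?_, comm_mem_Zs hG A B⟩
  rw [← hAB]
  ext i j
  by_cases hij : i = j
  · subst hij; simp
  · simp [Matrix.one_apply_ne hij, Matrix.diagonal_apply_ne _ hij]

/-- Every element of `SL(m+1, ℂ)` lies in `Zs G` when `G` is Zariski dense. -/
lemma all_mem_Zs {m : ℕ} {G : Subgroup (Matrix.SpecialLinearGroup (Fin (m + 1)) ℂ)}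
    (hG : IsZariskiDense G) (g : Matrix.SpecialLinearGroup (Fin (m + 1)) ℂ) :
    g ∈ Zs G := by
  classical
  have H : ∀ M : Matrix (Fin (m + 1)) (Fin (m + 1)) ℂ, M.det ≠ 0 →
      ∃ (z : Matrix.SpecialLinearGroup (Fin (m + 1)) ℂ) (csc : ℂ), csc ≠ 0 ∧
        M = csc • (z : Matrix (Fin (m + 1)) (Fin (m + 1)) ℂ) ∧ z ∈ Zs G := by
    intro M hM
    apply Matrix.diagonal_transvection_induction_of_det_ne_zero _ M hM
    · intro D hD
      obtain ⟨csc, hcsc⟩ := IsAlgClosed.exists_pow_nat_eq (k := ℂ)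
        (Matrix.det (Matrix.diagonal D)) (Nat.succ_pos m)
      have hc0 : csc ≠ 0 := by
        intro h0
        rw [h0, zero_pow (Nat.succ_ne_zero m)] at hcsc
        exact hD hcsc.symm
      have hdet1 : Matrix.det (Matrix.diagonal (fun i => csc⁻¹ * D i)) = 1 := by
        rw [Matrix.det_diagonal, Finset.prod_mul_distrib, Finset.prod_const,
          Finset.card_univ, Fintype.card_fin, ← Matrix.det_diagonal (d := D), inv_pow, hcsc]
        exact inv_mul_cancel₀ hD
      have hprod : ∏ i, (fun i => csc⁻¹ * D i) i = 1 := by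
        rw [← Matrix.det_diagonal]; exact hdet1
      obtain ⟨A, B, hAB⟩ := diag_eq_commutator m (fun i => csc⁻¹ * D i) hprod
      refine ⟨A * B * A⁻¹ * B⁻¹, csc, hc0, ?_, comm_mem_Zs hG A B⟩
      rw [← hAB]
      have hfun : (csc • fun i => csc⁻¹ * D i) = D := funext fun i => by
        show csc * (csc⁻¹ * D i) = D i
        field_simp
      rw [← Matrix.diagonal_smul, hfun]
    · intro t
      obtain ⟨A, B, hAB⟩ := transvection_eq_commutator t.i t.j t.hij t.c
      refine ⟨A * B * A⁻¹ * B⁻¹, 1, one_ne_zero, ?_, comm_mem_Zs hG A B⟩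
      rw [one_smul, ← hAB]
      rfl
    · rintro M N _ _ ⟨z1, c1, hc1, hM1, hz1⟩ ⟨z2, c2, hc2, hN2, hz2⟩
      refine ⟨z1 * z2, c1 * c2, mul_ne_zero hc1 hc2, ?_, mul_Zs hz1 hz2⟩
      rw [hM1, hN2, Matrix.SpecialLinearGroup.coe_mul, Matrix.smul_mul, Matrix.mul_smul,
        smul_smul]
  have hgdet : Matrix.det (g : Matrix (Fin (m + 1)) (Fin (m + 1)) ℂ) ≠ 0 := by
    rw [g.prop]; exact one_ne_zero
  obtain ⟨z, csc, hc0, hM, hz⟩ := H (g : Matrix (Fin (m + 1)) (Fin (m + 1)) ℂ) hgdet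
  have hpow : csc ^ (m + 1) = 1 := by
    have := g.prop
    rw [hM, Matrix.det_smul, Fintype.card_fin, z.prop, mul_one] at this
    exact this
  obtain ⟨w, hw, hwZ⟩ := scalar_mem_Zs hG csc hpow
  have hg_eq : g = w * z := by
    apply Subtype.ext
    rw [Matrix.SpecialLinearGroup.coe_mul, hw, hM, Matrix.smul_mul, one_mul]
  rw [hg_eq]
  exact mul_Zs hwZ hz

end ZDAux

/-- `G ≤ SL(n, ℂ)` is Zariski dense iff its commutator subgroup `[G,G]` is. -/
theorem zariskiDense_iff_commutator_zariskiDense (n : ℕ) (hn : 1 ≤ n)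
    (G : Subgroup (Matrix.SpecialLinearGroup (Fin n) ℂ)) :
    IsZariskiDense G ↔ IsZariskiDense ⁅G, G⁆ := by
  obtain ⟨m, rfl⟩ : ∃ m, n = m + 1 := ⟨n - 1, (Nat.succ_pred_eq_of_pos hn).symm⟩
  constructor
  · intro hG p hp g
    exact ZDAux.all_mem_Zs hG g p hp
  · intro hC p hp g
    have hle : ⁅G, G⁆ ≤ G := by
      rw [Subgroup.commutator_le]
      intro g₁ h₁ g₂ h₂
      rw [commutatorElement_def]
      exact mul_mem (mul_mem (mul_mem h₁ h₂) (inv_mem h₁)) (inv_mem h₂)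
    exact hC p (fun h hh => hp h (hle hh)) g
end
end

section
/- Let F be a field, τ a field automorphism of F with τ² = id, and G a subgroup of GL(n,F) that is absolutely irreducible (the F-linear span of G equals Mat(n,F)). If tr(g) = tr(τ(g)⁻¹) for all g ∈ G, then G preserves a non-degenerate τ-sesquilinear form: there exists an invertible matrix Ω ∈ GL(n,F) such that gᵀ Ω τ(g) = Ω for all g ∈ G. -/
open Matrix

private lemma sesq_aux_trace_std {n : ℕ} {F : Type*} [Field F]
    (A : Matrix (Fin n) (Fin n) F) (i j : Fin n) :
    Matrix.trace (A * Matrix.single j i 1) = A i j := by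
  simp [Matrix.trace, Matrix.diag, Matrix.mul_apply, Matrix.single, ite_and,
    Finset.sum_ite_eq, Finset.sum_ite_eq']

private lemma sesq_aux_nondeg {n : ℕ} {F : Type*} [Field F]
    (A : Matrix (Fin n) (Fin n) F) (h : ∀ Z, Matrix.trace (A * Z) = 0) : A = 0 := by
  ext i j
  have h2 := h (Matrix.single j i 1)
  rw [sesq_aux_trace_std] at h2
  simpa using h2

private lemma sesq_aux_ext_zero {n : ℕ} {F : Type*} [Field F]
    (A : Matrix (Fin n) (Fin n) F) (S : Set (Matrix (Fin n) (Fin n) F))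
    (hS : Submodule.span F S = ⊤)
    (h : ∀ Z ∈ S, Matrix.trace (A * Z) = 0) : A = 0 := by
  refine sesq_aux_nondeg A fun Z => ?_
  have hZ : Z ∈ Submodule.span F S := by rw [hS]; exact Submodule.mem_top
  refine Submodule.span_induction (p := fun Z _ => Matrix.trace (A * Z) = 0)
    h ?_ ?_ ?_ hZ
  · show Matrix.trace (A * 0) = 0
    rw [mul_zero, Matrix.trace_zero]
  · intro x y _ _ hx hy
    have hx' : Matrix.trace (A * x) = 0 := hx
    have hy' : Matrix.trace (A * y) = 0 := hy
    show Matrix.trace (A * (x + y)) = 0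
    rw [mul_add, Matrix.trace_add, hx', hy', add_zero]
  · intro a x _ hx
    have hx' : Matrix.trace (A * x) = 0 := hx
    show Matrix.trace (A * (a • x)) = 0
    rw [Matrix.mul_smul, Matrix.trace_smul, hx', smul_zero]

/-- A unital multiplicative linear endomorphism of a matrix algebra that is nonzero on the
rank-one idempotent `E₁₁` is inner. -/
private lemma sesq_aux_inner {n : ℕ} {F : Type*} [Field F] [NeZero n]
    (Φ : Matrix (Fin n) (Fin n) F →ₗ[F] Matrix (Fin n) (Fin n) F)
    (Φmul : ∀ X Y, Φ (X * Y) = Φ X * Φ Y)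
    (hΦE : Φ (Matrix.vecMulVec (Pi.single (0 : Fin n) (1 : F))
      (Pi.single (0 : Fin n) (1 : F))) ≠ 0) :
    ∃ P Q : Matrix (Fin n) (Fin n) F, P * Q = 1 ∧ Q * P = 1 ∧
      ∀ X, Φ X * P = P * X := by
  classical
  set e1 : Fin n → F := Pi.single (0 : Fin n) (1 : F) with he1_def
  set E : Matrix (Fin n) (Fin n) F := Matrix.vecMulVec e1 e1 with hE_def
  have hEE : E * E = E := by
    ext i j
    show ∑ k, (e1 i * e1 k) * (e1 k * e1 j) = e1 i * e1 j
    rw [Finset.sum_eq_single (0 : Fin n)]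
    · simp [he1_def]
    · intro b _ hb
      simp [he1_def, Pi.single_apply, hb]
    · simp
  obtain ⟨i0, j0, hij⟩ : ∃ i j, Φ E i j ≠ 0 := by
    by_contra h
    push_neg at h
    exact hΦE (by ext i j; simpa using h i j)
  set v0 : Fin n → F := Pi.single j0 (1 : F) with hv0_def
  obtain ⟨w, hw_def⟩ : ∃ w : Fin n → F, w = Φ E *ᵥ v0 := ⟨_, rfl⟩
  have hw : w ≠ 0 := by
    intro h
    have hwi : w i0 = 0 := by rw [h]; rfl
    rw [hw_def] at hwi
    have heval : (Φ E *ᵥ v0) i0 = Φ E i0 j0 := by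
      show ∑ k, Φ E i0 k * v0 k = _
      rw [Finset.sum_eq_single j0]
      · simp [hv0_def]
      · intro b _ hb; simp [hv0_def, Pi.single_apply, hb]
      · simp
    rw [heval] at hwi
    exact hij hwi
  have vmv_add : ∀ x y : Fin n → F,
      Matrix.vecMulVec (x + y) e1 = Matrix.vecMulVec x e1 + Matrix.vecMulVec y e1 := by
    intro x y; ext i j
    show (x i + y i) * e1 j = x i * e1 j + y i * e1 j
    ring
  have vmv_smul : ∀ (c : F) (x : Fin n → F),
      Matrix.vecMulVec (c • x) e1 = c • Matrix.vecMulVec x e1 := by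
    intro c x; ext i j
    show (c * x i) * e1 j = c * (x i * e1 j)
    ring
  have vmv_mul : ∀ (X : Matrix (Fin n) (Fin n) F) (x : Fin n → F),
      Matrix.vecMulVec (X *ᵥ x) e1 = X * Matrix.vecMulVec x e1 := by
    intro X x; ext i j
    show (∑ k, X i k * x k) * e1 j = ∑ k, X i k * (x k * e1 j)
    rw [Finset.sum_mul]
    exact Finset.sum_congr rfl fun k _ => by ring
  set Plin : (Fin n → F) →ₗ[F] (Fin n → F) :=
    { toFun := fun x => Φ (Matrix.vecMulVec x e1) *ᵥ w
      map_add' := by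
        intro x y
        show Φ (Matrix.vecMulVec (x + y) e1) *ᵥ w
          = Φ (Matrix.vecMulVec x e1) *ᵥ w + Φ (Matrix.vecMulVec y e1) *ᵥ w
        rw [vmv_add, map_add, Matrix.add_mulVec]
      map_smul' := by
        intro c x
        show Φ (Matrix.vecMulVec (c • x) e1) *ᵥ w = c • (Φ (Matrix.vecMulVec x e1) *ᵥ w)
        rw [vmv_smul, _root_.map_smul, Matrix.smul_mulVec] } with hPlin_def
  have hPe1 : Plin e1 = w := by
    show Φ (Matrix.vecMulVec e1 e1) *ᵥ w = w
    rw [← hE_def, hw_def, Matrix.mulVec_mulVec, ← Φmul, hEE]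
  have hPint : ∀ (X : Matrix (Fin n) (Fin n) F) (x : Fin n → F),
      Plin (X *ᵥ x) = Φ X *ᵥ Plin x := by
    intro X x
    show Φ (Matrix.vecMulVec (X *ᵥ x) e1) *ᵥ w = Φ X *ᵥ (Φ (Matrix.vecMulVec x e1) *ᵥ w)
    rw [vmv_mul, Φmul, Matrix.mulVec_mulVec]
  have hPinj : Function.Injective Plin := by
    rw [injective_iff_map_eq_zero]
    intro x hx
    by_contra hxne
    obtain ⟨i, hi⟩ : ∃ i, x i ≠ 0 := by
      by_contra h; push_neg at h; exact hxne (funext h)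
    set X : Matrix (Fin n) (Fin n) F :=
      (x i)⁻¹ • Matrix.vecMulVec e1 (Pi.single i (1 : F)) with hX_def
    have hXx : X *ᵥ x = e1 := by
      funext j
      rw [hX_def, Matrix.smul_mulVec]
      have hbase : (Matrix.vecMulVec e1 (Pi.single i (1 : F)) *ᵥ x) j = e1 j * x i := by
        simp only [Matrix.mulVec, dotProduct, Matrix.vecMulVec_apply]
        rw [Finset.sum_eq_single i]
        · simp
        · intro b _ hb; simp [Pi.single_apply, hb]
        · simp
      rw [Pi.smul_apply, hbase]
      show (x i)⁻¹ * (e1 j * x i) = e1 j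
      field_simp
    have hw0 : w = 0 := by
      rw [← hPe1, ← hXx, hPint, hx, Matrix.mulVec_zero]
    exact hw hw0
  have hPsurj : Function.Surjective Plin := LinearMap.injective_iff_surjective.mp hPinj
  set Peq : (Fin n → F) ≃ₗ[F] (Fin n → F) := LinearEquiv.ofBijective Plin ⟨hPinj, hPsurj⟩
    with hPeq_def
  set Pm := LinearMap.toMatrix' Plin with hPm_def
  set Qm := LinearMap.toMatrix' (Peq.symm : (Fin n → F) →ₗ[F] (Fin n → F)) with hQm_def
  have hcomp1 : (Peq.symm : (Fin n → F) →ₗ[F] (Fin n → F)) ∘ₗ Plin = LinearMap.id := by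
    refine LinearMap.ext fun x => ?_
    exact Peq.symm_apply_apply x
  have hcomp2 : Plin ∘ₗ (Peq.symm : (Fin n → F) →ₗ[F] (Fin n → F)) = LinearMap.id := by
    refine LinearMap.ext fun x => ?_
    exact Peq.apply_symm_apply x
  have hQP : Qm * Pm = 1 := by
    rw [hQm_def, hPm_def, ← LinearMap.toMatrix'_comp, hcomp1, LinearMap.toMatrix'_id]
  have hPQ : Pm * Qm = 1 := by
    rw [hQm_def, hPm_def, ← LinearMap.toMatrix'_comp, hcomp2, LinearMap.toMatrix'_id]
  refine ⟨Pm, Qm, hPQ, hQP, fun X => ?_⟩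
  have hc : Matrix.toLin' (Φ X) ∘ₗ Plin = Plin ∘ₗ Matrix.toLin' X := by
    refine LinearMap.ext fun x => ?_
    simp only [LinearMap.comp_apply, Matrix.toLin'_apply]
    exact (hPint X x).symm
  have h4 := congrArg LinearMap.toMatrix' hc
  rwa [LinearMap.toMatrix'_comp, LinearMap.toMatrix'_comp,
    LinearMap.toMatrix'_toLin', LinearMap.toMatrix'_toLin', ← hPm_def] at h4

set_option maxHeartbeats 1000000 in
/-- If `G ≤ GL(n, F)` is absolutely irreducible and `tr(g) = tr(τ(g)⁻¹)` for all `g ∈ G`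
(`τ` a field automorphism with `τ² = id`), then `G` preserves a non-degenerate
`τ`-sesquilinear form. -/
theorem preserves_sesquilinear_form_of_trace_eq
    {n : ℕ} {F : Type*} [Field F] (τ : F →+* F) (hτ : ∀ x, τ (τ x) = x)
    (G : Subgroup (Matrix (Fin n) (Fin n) F)ˣ)
    (habs : Submodule.span F
      ((fun g : (Matrix (Fin n) (Fin n) F)ˣ => (g : Matrix (Fin n) (Fin n) F)) ''
        (G : Set (Matrix (Fin n) (Fin n) F)ˣ)) = ⊤)
    (htr : ∀ g ∈ G,
      Matrix.trace ((g : Matrix (Fin n) (Fin n) F)) =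
        Matrix.trace
          (((Units.map τ.mapMatrix.toMonoidHom g)⁻¹ : (Matrix (Fin n) (Fin n) F)ˣ) :
            Matrix (Fin n) (Fin n) F)) :
    ∃ Ω : (Matrix (Fin n) (Fin n) F)ˣ, ∀ g ∈ G,
      ((g : Matrix (Fin n) (Fin n) F))ᵀ * (Ω : Matrix (Fin n) (Fin n) F) *
          τ.mapMatrix (g : Matrix (Fin n) (Fin n) F) =
        (Ω : Matrix (Fin n) (Fin n) F) := by
  classical
  rcases Nat.eq_zero_or_pos n with h0 | hn
  · subst h0
    refine ⟨1, fun g _ => ?_⟩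
    ext i j
    exact absurd i.2 (Nat.not_lt_zero _)
  haveI : NeZero n := ⟨by omega⟩
  set s : Set (Matrix (Fin n) (Fin n) F) :=
    ((fun g : (Matrix (Fin n) (Fin n) F)ˣ => (g : Matrix (Fin n) (Fin n) F)) ''
      (G : Set (Matrix (Fin n) (Fin n) F)ˣ)) with hs_def
  have hs : Submodule.span F s = ⊤ := habs
  set e : Matrix (Fin n) (Fin n) F → Matrix (Fin n) (Fin n) F :=
    fun X => (τ.mapMatrix X)ᵀ with he_def
  set σu : (Matrix (Fin n) (Fin n) F)ˣ → Matrix (Fin n) (Fin n) F :=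
    fun u => (τ.mapMatrix ((u⁻¹ : (Matrix (Fin n) (Fin n) F)ˣ) : Matrix (Fin n) (Fin n) F))ᵀ
    with hσ_def
  have e_e : ∀ X, e (e X) = X := by
    intro X; ext i j
    show τ (τ (X i j)) = X i j
    exact hτ _
  have e_add : ∀ X Y, e (X + Y) = e X + e Y := by
    intro X Y; ext i j
    show τ ((X + Y) j i) = τ (X j i) + τ (Y j i)
    rw [Matrix.add_apply, map_add]
  have e_smul : ∀ (c : F) X, e (c • X) = τ c • e X := by
    intro c X; ext i j
    show τ ((c • X) j i) = τ c * τ (X j i)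
    rw [Matrix.smul_apply, smul_eq_mul, _root_.map_mul]
  have σu_mul : ∀ u v, σu (u * v) = σu u * σu v := by
    intro u v
    show (τ.mapMatrix (((u * v)⁻¹ : (Matrix (Fin n) (Fin n) F)ˣ) : Matrix (Fin n) (Fin n) F))ᵀ
      = _
    rw [_root_.mul_inv_rev, Units.val_mul, _root_.map_mul, Matrix.transpose_mul]
  -- trace identity
  have htr' : ∀ u, u ∈ G → Matrix.trace (σu u) = Matrix.trace (u : Matrix (Fin n) (Fin n) F) := by
    intro u hu
    have h := htr u hu
    have hcoe : (((Units.map τ.mapMatrix.toMonoidHom u)⁻¹ : (Matrix (Fin n) (Fin n) F)ˣ) :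
          Matrix (Fin n) (Fin n) F)
        = τ.mapMatrix ((u⁻¹ : (Matrix (Fin n) (Fin n) F)ˣ) : Matrix (Fin n) (Fin n) F) := by
      rw [← map_inv]
      rfl
    rw [h, hcoe]
    exact Matrix.trace_transpose _
  have key : ∀ u ∈ G, ∀ v ∈ G,
      Matrix.trace (σu u * σu v)
        = Matrix.trace ((u : Matrix (Fin n) (Fin n) F) * (v : Matrix (Fin n) (Fin n) F)) := by
    intro u hu v hv
    rw [← σu_mul, htr' (u * v) (mul_mem hu hv)]
    rfl
  -- the span of `σu '' G` is everything
  have himg : σu '' (G : Set (Matrix (Fin n) (Fin n) F)ˣ) = e '' s := by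
    ext Z
    constructor
    · rintro ⟨u, hu, rfl⟩
      exact ⟨((u⁻¹ : (Matrix (Fin n) (Fin n) F)ˣ) : Matrix (Fin n) (Fin n) F),
        ⟨u⁻¹, inv_mem hu, rfl⟩, rfl⟩
    · rintro ⟨X, ⟨u, hu, rfl⟩, rfl⟩
      refine ⟨u⁻¹, inv_mem hu, ?_⟩
      show (τ.mapMatrix (((u⁻¹)⁻¹ : (Matrix (Fin n) (Fin n) F)ˣ) :
        Matrix (Fin n) (Fin n) F))ᵀ = e (u : Matrix (Fin n) (Fin n) F)
      rw [inv_inv]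
  have hTspan : Submodule.span F (σu '' (G : Set (Matrix (Fin n) (Fin n) F)ˣ)) = ⊤ := by
    rw [himg, eq_top_iff]
    rintro X -
    have hX : e X ∈ Submodule.span F s := by rw [hs]; exact Submodule.mem_top
    have main : e (e X) ∈ Submodule.span F (e '' s) := by
      refine Submodule.span_induction
        (p := fun Y _ => e Y ∈ Submodule.span F (e '' s))
        (fun x hx => Submodule.subset_span ⟨x, hx, rfl⟩) ?_ ?_ ?_ hX
      · show e 0 ∈ Submodule.span F (e '' s)
        have hz : e 0 = 0 := by
          ext i j
          show τ ((0 : Matrix (Fin n) (Fin n) F) j i) = (0 : Matrix (Fin n) (Fin n) F) i j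
          rw [Matrix.zero_apply, Matrix.zero_apply, map_zero]
        rw [hz]; exact Submodule.zero_mem _
      · intro x y _ _ hx hy
        have hx' : e x ∈ Submodule.span F (e '' s) := hx
        have hy' : e y ∈ Submodule.span F (e '' s) := hy
        show e (x + y) ∈ Submodule.span F (e '' s)
        rw [e_add]; exact Submodule.add_mem _ hx' hy'
      · intro a x _ hx
        have hx' : e x ∈ Submodule.span F (e '' s) := hx
        show e (a • x) ∈ Submodule.span F (e '' s)
        rw [e_smul]; exact Submodule.smul_mem _ _ hx'
    rwa [e_e] at main
  -- a basis contained in the spanning set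
  obtain ⟨t, hts, htspan, htind⟩ := exists_linearIndependent F s
  rw [hs] at htspan
  let B : Module.Basis t F (Matrix (Fin n) (Fin n) F) :=
    Module.Basis.mk htind (by rw [Subtype.range_coe, htspan])
  -- the semilinear twist as a bare function on matrices
  set f : Matrix (Fin n) (Fin n) F → Matrix (Fin n) (Fin n) F := fun X =>
    if h : ∃ u : (Matrix (Fin n) (Fin n) F)ˣ, u ∈ G ∧ (u : Matrix (Fin n) (Fin n) F) = X
    then σu h.choose else 0 with hf_def
  have f_spec : ∀ u : (Matrix (Fin n) (Fin n) F)ˣ, u ∈ G →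
      f (u : Matrix (Fin n) (Fin n) F) = σu u := by
    intro u hu
    have hex : ∃ v : (Matrix (Fin n) (Fin n) F)ˣ, v ∈ G ∧
        (v : Matrix (Fin n) (Fin n) F) = (u : Matrix (Fin n) (Fin n) F) := ⟨u, hu, rfl⟩
    show (if h : ∃ v : (Matrix (Fin n) (Fin n) F)ˣ, v ∈ G ∧
        (v : Matrix (Fin n) (Fin n) F) = (u : Matrix (Fin n) (Fin n) F)
      then σu h.choose else 0) = σu u
    rw [dif_pos hex]
    have hspec := hex.choose_spec
    rw [Units.ext hspec.2]
  set Φ : Matrix (Fin n) (Fin n) F →ₗ[F] Matrix (Fin n) (Fin n) F :=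
    B.constr F (fun i => f (i : Matrix (Fin n) (Fin n) F)) with hΦ_def
  have hB : ∀ i : t, B i = (i : Matrix (Fin n) (Fin n) F) := fun i => Module.Basis.mk_apply _ _ _
  have hΦB : ∀ i : t, Φ (i : Matrix (Fin n) (Fin n) F) = f (i : Matrix (Fin n) (Fin n) F) := by
    intro i
    calc Φ (i : Matrix (Fin n) (Fin n) F) = Φ (B i) := by rw [hB i]
      _ = f (i : Matrix (Fin n) (Fin n) F) :=
        B.constr_basis F (fun i => f (i : Matrix (Fin n) (Fin n) F)) i
  -- the pairing identity
  have pair : ∀ X, ∀ u ∈ G,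
      Matrix.trace (Φ X * σu u) = Matrix.trace (X * (u : Matrix (Fin n) (Fin n) F)) := by
    intro X u hu
    have hX : X ∈ Submodule.span F (Set.range B) := by
      rw [B.span_eq]; exact Submodule.mem_top
    refine Submodule.span_induction
      (p := fun Y _ => Matrix.trace (Φ Y * σu u)
        = Matrix.trace (Y * (u : Matrix (Fin n) (Fin n) F)))
      ?_ ?_ ?_ ?_ hX
    · rintro Y ⟨i, rfl⟩
      show Matrix.trace (Φ (B i) * σu u)
        = Matrix.trace (B i * (u : Matrix (Fin n) (Fin n) F))
      rw [hB i, hΦB i]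
      obtain ⟨v, hv, hvi⟩ : ∃ v : (Matrix (Fin n) (Fin n) F)ˣ, v ∈ G ∧
          (v : Matrix (Fin n) (Fin n) F) = (i : Matrix (Fin n) (Fin n) F) := hts i.2
      rw [← hvi, f_spec v hv]
      exact key v hv u hu
    · show Matrix.trace (Φ 0 * σu u) = Matrix.trace (0 * (u : Matrix (Fin n) (Fin n) F))
      simp
    · intro x y _ _ hx hy
      have hx' : Matrix.trace (Φ x * σu u)
        = Matrix.trace (x * (u : Matrix (Fin n) (Fin n) F)) := hx
      have hy' : Matrix.trace (Φ y * σu u)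
        = Matrix.trace (y * (u : Matrix (Fin n) (Fin n) F)) := hy
      show Matrix.trace (Φ (x + y) * σu u)
        = Matrix.trace ((x + y) * (u : Matrix (Fin n) (Fin n) F))
      rw [map_add, add_mul, add_mul, Matrix.trace_add, Matrix.trace_add, hx', hy']
    · intro a x _ hx
      have hx' : Matrix.trace (Φ x * σu u)
        = Matrix.trace (x * (u : Matrix (Fin n) (Fin n) F)) := hx
      show Matrix.trace (Φ (a • x) * σu u)
        = Matrix.trace ((a • x) * (u : Matrix (Fin n) (Fin n) F))
      rw [_root_.map_smul, Matrix.smul_mul, Matrix.smul_mul, Matrix.trace_smul,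
        Matrix.trace_smul, hx']
  -- Φ agrees with σu on G
  have ΦG : ∀ u : (Matrix (Fin n) (Fin n) F)ˣ, u ∈ G →
      Φ (u : Matrix (Fin n) (Fin n) F) = σu u := by
    intro u hu
    have hzero : Φ (u : Matrix (Fin n) (Fin n) F) - σu u = 0 := by
      refine sesq_aux_ext_zero _ (σu '' (G : Set (Matrix (Fin n) (Fin n) F)ˣ)) hTspan ?_
      rintro Z ⟨v, hv, rfl⟩
      rw [sub_mul, Matrix.trace_sub, pair _ v hv, key u hu v hv, sub_self]
    exact sub_eq_zero.mp hzero
  -- multiplicativity of Φ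
  have Φmul : ∀ X Y, Φ (X * Y) = Φ X * Φ Y := by
    have base : ∀ u : (Matrix (Fin n) (Fin n) F)ˣ, u ∈ G → ∀ Y,
        Φ ((u : Matrix (Fin n) (Fin n) F) * Y) = Φ (u : Matrix (Fin n) (Fin n) F) * Φ Y := by
      intro u hu Y
      have hY : Y ∈ Submodule.span F s := by rw [hs]; exact Submodule.mem_top
      refine Submodule.span_induction
        (p := fun Z _ => Φ ((u : Matrix (Fin n) (Fin n) F) * Z)
          = Φ (u : Matrix (Fin n) (Fin n) F) * Φ Z) ?_ ?_ ?_ ?_ hY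
      · rintro Z ⟨v, hv, rfl⟩
        show Φ ((u : Matrix (Fin n) (Fin n) F) * (v : Matrix (Fin n) (Fin n) F))
          = Φ (u : Matrix (Fin n) (Fin n) F) * Φ (v : Matrix (Fin n) (Fin n) F)
        have h1 : (u : Matrix (Fin n) (Fin n) F) * (v : Matrix (Fin n) (Fin n) F)
          = ((u * v : (Matrix (Fin n) (Fin n) F)ˣ) : Matrix (Fin n) (Fin n) F) := rfl
        rw [h1, ΦG _ (mul_mem hu hv), ΦG u hu, ΦG v hv, σu_mul]
      · show Φ ((u : Matrix (Fin n) (Fin n) F) * 0)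
          = Φ (u : Matrix (Fin n) (Fin n) F) * Φ 0
        simp
      · intro x y _ _ hx hy
        have hx' : Φ ((u : Matrix (Fin n) (Fin n) F) * x)
          = Φ (u : Matrix (Fin n) (Fin n) F) * Φ x := hx
        have hy' : Φ ((u : Matrix (Fin n) (Fin n) F) * y)
          = Φ (u : Matrix (Fin n) (Fin n) F) * Φ y := hy
        show Φ ((u : Matrix (Fin n) (Fin n) F) * (x + y))
          = Φ (u : Matrix (Fin n) (Fin n) F) * Φ (x + y)
        rw [mul_add, map_add, map_add, hx', hy', mul_add]
      · intro a x _ hx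
        have hx' : Φ ((u : Matrix (Fin n) (Fin n) F) * x)
          = Φ (u : Matrix (Fin n) (Fin n) F) * Φ x := hx
        show Φ ((u : Matrix (Fin n) (Fin n) F) * (a • x))
          = Φ (u : Matrix (Fin n) (Fin n) F) * Φ (a • x)
        rw [Matrix.mul_smul, _root_.map_smul, _root_.map_smul, hx', Matrix.mul_smul]
    intro X Y
    have hX : X ∈ Submodule.span F s := by rw [hs]; exact Submodule.mem_top
    refine Submodule.span_induction
      (p := fun Z _ => Φ (Z * Y) = Φ Z * Φ Y) ?_ ?_ ?_ ?_ hX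
    · rintro Z ⟨v, hv, rfl⟩
      exact base v hv Y
    · show Φ (0 * Y) = Φ 0 * Φ Y
      simp
    · intro x y _ _ hx hy
      have hx' : Φ (x * Y) = Φ x * Φ Y := hx
      have hy' : Φ (y * Y) = Φ y * Φ Y := hy
      show Φ ((x + y) * Y) = Φ (x + y) * Φ Y
      rw [add_mul, map_add, map_add, hx', hy', add_mul]
    · intro a x _ hx
      have hx' : Φ (x * Y) = Φ x * Φ Y := hx
      show Φ ((a • x) * Y) = Φ (a • x) * Φ Y
      rw [Matrix.smul_mul, _root_.map_smul, _root_.map_smul, hx', Matrix.smul_mul]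
  -- Φ is nonzero on the rank-one idempotent
  have hΦE : Φ (Matrix.vecMulVec (Pi.single (0 : Fin n) (1 : F))
      (Pi.single (0 : Fin n) (1 : F))) ≠ 0 := by
    intro h
    have hEne : Matrix.vecMulVec (Pi.single (0 : Fin n) (1 : F))
        (Pi.single (0 : Fin n) (1 : F)) ≠ 0 := by
      intro hE0
      have h00 := congrFun (congrFun hE0 0) 0
      rw [Matrix.vecMulVec_apply] at h00
      simp at h00
    refine hEne (sesq_aux_ext_zero _ s hs ?_)
    rintro Z ⟨v, hv, rfl⟩
    have hp := pair (Matrix.vecMulVec (Pi.single (0 : Fin n) (1 : F))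
      (Pi.single (0 : Fin n) (1 : F))) v hv
    rw [h, Matrix.zero_mul, Matrix.trace_zero] at hp
    exact hp.symm
  obtain ⟨Pm, Qm, hPQ, hQP, hint⟩ := sesq_aux_inner Φ Φmul hΦE
  -- conclusion
  refine ⟨⟨Pmᵀ, Qmᵀ, ?_, ?_⟩, ?_⟩
  · rw [← Matrix.transpose_mul, hQP, Matrix.transpose_one]
  · rw [← Matrix.transpose_mul, hPQ, Matrix.transpose_one]
  intro g hg
  have h1 : σu g * Pm = Pm * (g : Matrix (Fin n) (Fin n) F) := by
    rw [← ΦG g hg]; exact hint _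
  have h2 : Pmᵀ * τ.mapMatrix ((g⁻¹ : (Matrix (Fin n) (Fin n) F)ˣ) : Matrix (Fin n) (Fin n) F)
      = (g : Matrix (Fin n) (Fin n) F)ᵀ * Pmᵀ := by
    have h5 := congrArg Matrix.transpose h1
    rw [Matrix.transpose_mul, Matrix.transpose_mul] at h5
    have h6 : (σu g)ᵀ
        = τ.mapMatrix ((g⁻¹ : (Matrix (Fin n) (Fin n) F)ˣ) : Matrix (Fin n) (Fin n) F) :=
      Matrix.transpose_transpose _
    rw [h6] at h5
    exact h5
  have h3 : τ.mapMatrix ((g⁻¹ : (Matrix (Fin n) (Fin n) F)ˣ) : Matrix (Fin n) (Fin n) F)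
      * τ.mapMatrix ((g : (Matrix (Fin n) (Fin n) F)ˣ) : Matrix (Fin n) (Fin n) F) = 1 := by
    rw [← _root_.map_mul, Units.inv_mul, _root_.map_one]
  calc (g : Matrix (Fin n) (Fin n) F)ᵀ * (Pmᵀ) * τ.mapMatrix (g : Matrix (Fin n) (Fin n) F)
      = Pmᵀ * τ.mapMatrix ((g⁻¹ : (Matrix (Fin n) (Fin n) F)ˣ) : Matrix (Fin n) (Fin n) F)
        * τ.mapMatrix ((g : (Matrix (Fin n) (Fin n) F)ˣ) : Matrix (Fin n) (Fin n) F) := by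
        rw [h2]
    _ = Pmᵀ * (τ.mapMatrix ((g⁻¹ : (Matrix (Fin n) (Fin n) F)ˣ) : Matrix (Fin n) (Fin n) F)
        * τ.mapMatrix ((g : (Matrix (Fin n) (Fin n) F)ˣ) : Matrix (Fin n) (Fin n) F)) := by
        rw [Matrix.mul_assoc]
    _ = Pmᵀ := by rw [h3, Matrix.mul_one]
end

section
/- Let ℙ be an algebraic number field with ring of integers 𝒪, μ a positive integer, R = 𝒪[1/μ], and H ≤ GL(n,R). If there exists a maximal ideal I of R such that the reduction φ_I(H) is absolutely irreducible over R/I (i.e., the (R/I)-linear span of φ_I(H) equals Mat(n,R/I)), then H is absolutely irreducible over ℙ (the ℙ-linear span of H equals Mat(n,ℙ)). -/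
open Matrix

set_option synthInstance.maxHeartbeats 400000
set_option maxHeartbeats 800000

noncomputable section

/-- The subring `𝒪[1/μ]` of a number field `P`, where `𝒪` is the ring of integers
(the integral closure of `ℤ` in `P`). -/
def oneOverMuRing (P : Type*) [Field P] (μ : ℕ) : Subring P :=
  Subring.closure ((integralClosure ℤ P : Set P) ∪ {(μ : P)⁻¹})

def coordMap' {n : ℕ} {ι : Type*} (e : ι ≃ (Fin n × Fin n)) (K : Type*) [CommRing K] :
    Matrix (Fin n) (Fin n) K →ₗ[K] (ι → K) where
  toFun := fun M j => M (e j).1 (e j).2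
  map_add' := by intros; ext; simp
  map_smul' := by intros; ext; simp

lemma linIndep_transfer {R k F : Type*} [CommRing R] [Field k] [Field F]
    {n : ℕ} {ι : Type*} [Fintype ι] [DecidableEq ι] (e : ι ≃ (Fin n × Fin n))
    (φ : R →+* k) (ψ : R →+* F) (hψ : Function.Injective ψ)
    (v : ι → Matrix (Fin n) (Fin n) R)
    (h : LinearIndependent k (fun i => (v i).map φ)) :
    LinearIndependent F (fun i => (v i).map ψ) := by
  classical
  set D : Matrix ι ι R := Matrix.of fun i j => v i (e j).1 (e j).2 with hD
  have hcompk : (fun i => (D.map φ) i) = (coordMap' e k) ∘ (fun i => (v i).map φ) := by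
    funext i j; simp [hD, coordMap', Matrix.map_apply]
  have hcompF : (fun i => (D.map ψ) i) = (coordMap' e F) ∘ (fun i => (v i).map ψ) := by
    funext i j; simp [hD, coordMap', Matrix.map_apply]
  have hinjk : Function.Injective (coordMap' e k) := by
    intro M N hMN; ext a b
    simpa [coordMap'] using congrFun hMN (e.symm (a, b))
  have hrowsk : LinearIndependent k (fun i => (D.map φ) i) := by
    rw [hcompk]
    exact h.map' (coordMap' e k) (LinearMap.ker_eq_bot.mpr hinjk)
  have hdetk : (D.map φ).det ≠ 0 :=
    isUnit_iff_ne_zero.mp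
      ((Matrix.isUnit_iff_isUnit_det _).mp (linearIndependent_rows_iff_isUnit.mp hrowsk))
  have hdetR : D.det ≠ 0 := by
    intro h0
    apply hdetk
    rw [← RingHom.mapMatrix_apply, ← RingHom.map_det, h0, map_zero]
  have hdetF : (D.map ψ).det ≠ 0 := by
    rw [← RingHom.mapMatrix_apply, ← RingHom.map_det]
    intro h0
    exact hdetR (hψ (by rw [h0, map_zero]))
  have hrowsF : LinearIndependent F (fun i => (D.map ψ) i) :=
    linearIndependent_rows_iff_isUnit.mpr
      ((Matrix.isUnit_iff_isUnit_det _).mpr (isUnit_iff_ne_zero.mpr hdetF))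
  rw [hcompF] at hrowsF
  exact hrowsF.of_comp (coordMap' e F)

/-- If the reduction of `H ≤ GL(n, R)`, `R = 𝒪[1/μ]`, modulo some maximal ideal `I` of `R`
is absolutely irreducible over `R/I`, then `H` is absolutely irreducible over `ℙ`. -/
theorem absolutelyIrreducible_of_reduction_absolutelyIrreducible
    (P : Type*) [Field P] [NumberField P] (μ : ℕ) (hμ : 0 < μ) (n : ℕ)
    (H : Subgroup (Matrix (Fin n) (Fin n) ↥(oneOverMuRing P μ))ˣ)
    (I : Ideal ↥(oneOverMuRing P μ)) (hI : I.IsMaximal)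
    (habs : Submodule.span (↥(oneOverMuRing P μ) ⧸ I)
      ((fun g : (Matrix (Fin n) (Fin n) ↥(oneOverMuRing P μ))ˣ =>
        (Ideal.Quotient.mk I).mapMatrix (g : Matrix (Fin n) (Fin n) ↥(oneOverMuRing P μ))) ''
        (H : Set (Matrix (Fin n) (Fin n) ↥(oneOverMuRing P μ))ˣ)) = ⊤) :
    Submodule.span P
      ((fun g : (Matrix (Fin n) (Fin n) ↥(oneOverMuRing P μ))ˣ =>
        (oneOverMuRing P μ).subtype.mapMatrix
          (g : Matrix (Fin n) (Fin n) ↥(oneOverMuRing P μ))) ''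
        (H : Set (Matrix (Fin n) (Fin n) ↥(oneOverMuRing P μ))ˣ)) = ⊤ := by
  classical
  haveI := hI
  set R := ↥(oneOverMuRing P μ)
  set k := R ⧸ I
  letI : Field k := Ideal.Quotient.field I
  set Sk : Set (Matrix (Fin n) (Fin n) k) :=
    ((fun g : (Matrix (Fin n) (Fin n) R)ˣ =>
        (Ideal.Quotient.mk I).mapMatrix (g : Matrix (Fin n) (Fin n) R)) ''
        (H : Set (Matrix (Fin n) (Fin n) R)ˣ)) with hSk
  obtain ⟨b, hbsub, hbspan, hbind⟩ := exists_linearIndependent k Sk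
  rw [habs] at hbspan
  have hbasis : Module.Basis b k (Matrix (Fin n) (Fin n) k) :=
    Module.Basis.mk hbind (by rw [← hbspan]; exact le_of_eq (congrArg _ (Subtype.range_coe).symm))
  haveI : Fintype b := FiniteDimensional.fintypeBasisIndex hbasis
  have hcardb : Fintype.card b = Fintype.card (Fin n × Fin n) := by
    have h1 := Module.finrank_eq_card_basis hbasis
    have h2 : Module.finrank k (Matrix (Fin n) (Fin n) k) = n * n := by
      rw [Module.finrank_matrix]; simp
    simp only [Fintype.card_prod, Fintype.card_fin]
    omega
  have e : b ≃ (Fin n × Fin n) := Fintype.equivOfCardEq hcardb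
  have hpre : ∀ x : b, ∃ g : (Matrix (Fin n) (Fin n) R)ˣ,
      g ∈ H ∧ (g : Matrix (Fin n) (Fin n) R).map (Ideal.Quotient.mk I) = ↑x := by
    intro x
    obtain ⟨g, hg, hgx⟩ := hbsub x.2
    exact ⟨g, hg, hgx⟩
  choose g hgH hgx using hpre
  set v : b → Matrix (Fin n) (Fin n) R := fun x => ↑(g x) with hv
  have hlik : LinearIndependent k (fun x : b => (v x).map (Ideal.Quotient.mk I)) := by
    have : (fun x : b => (v x).map (Ideal.Quotient.mk I)) = (fun x : b => (x : Matrix (Fin n) (Fin n) k)) := by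
      funext x; exact hgx x
    rw [this]
    exact hbind
  have hsubinj : Function.Injective ((oneOverMuRing P μ).subtype : R →+* P) :=
    Subtype.val_injective
  have hliP : LinearIndependent P (fun x : b => (v x).map ((oneOverMuRing P μ).subtype)) :=
    linIndep_transfer e (Ideal.Quotient.mk I) _ hsubinj v hlik
  set SP : Set (Matrix (Fin n) (Fin n) P) :=
    ((fun g : (Matrix (Fin n) (Fin n) R)ˣ =>
        (oneOverMuRing P μ).subtype.mapMatrix (g : Matrix (Fin n) (Fin n) R)) ''
        (H : Set (Matrix (Fin n) (Fin n) R)ˣ)) with hSP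
  have hrange : Set.range (fun x : b => (v x).map ((oneOverMuRing P μ).subtype)) ⊆ SP := by
    rintro _ ⟨x, rfl⟩
    exact ⟨g x, hgH x, rfl⟩
  apply Submodule.eq_top_of_finrank_eq
  have h1 : Module.finrank P ↥(Submodule.span P
      (Set.range (fun x : b => (v x).map ((oneOverMuRing P μ).subtype)))) = Fintype.card b :=
    finrank_span_eq_card hliP
  have hle1 : Module.finrank P ↥(Submodule.span P
      (Set.range (fun x : b => (v x).map ((oneOverMuRing P μ).subtype)))) ≤
      Module.finrank P ↥(Submodule.span P SP) :=
    Submodule.finrank_mono (Submodule.span_mono hrange)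
  have hle2 : Module.finrank P ↥(Submodule.span P SP) ≤ Module.finrank P (Matrix (Fin n) (Fin n) P) :=
    Submodule.finrank_le _
  have h2 : Module.finrank P (Matrix (Fin n) (Fin n) P) = n * n := by
    rw [Module.finrank_matrix]; simp
  rw [h1] at hle1
  simp only [Fintype.card_prod, Fintype.card_fin] at hcardb
  omega
end
end

section
/- Let F be a field and let G ≤ GL(n,F) be conjugate in GL(n,F) to a group of monomial matrices (matrices with exactly one nonzero entry in each row and each column). Let e be the exponent of the symmetric group Sym(n). Then gᵉhᵉ = hᵉgᵉ for all g, h ∈ G. -/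
open Matrix

/-- A monomial matrix: exactly one nonzero entry in each row and each column. -/
def IsMonomialMatrix {n : ℕ} {F : Type*} [Field F] (M : Matrix (Fin n) (Fin n) F) : Prop :=
  (∀ i, ∃! j, M i j ≠ 0) ∧ (∀ j, ∃! i, M i j ≠ 0)

lemma IsMonomialMatrix.exists_perm {n : ℕ} {F : Type*} [Field F]
    {M : Matrix (Fin n) (Fin n) F} (hM : IsMonomialMatrix M) :
    ∃ σ : Equiv.Perm (Fin n), ∀ i j, M i j ≠ 0 ↔ j = σ i := by
  classical
  have f : ∀ i, ∃ j, M i j ≠ 0 := fun i => (hM.1 i).exists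
  set g : Fin n → Fin n := fun i => (f i).choose with hg
  have hgne : ∀ i, M i (g i) ≠ 0 := fun i => (f i).choose_spec
  have hinj : Function.Injective g := by
    intro i i' hii
    obtain ⟨i₀, _, huniq⟩ := hM.2 (g i)
    have h1 := huniq i (hgne i)
    have h2 := huniq i' (by simpa [hii] using hgne i')
    rw [h1, h2]
  have hbij : Function.Bijective g := (Finite.injective_iff_bijective).mp hinj
  refine ⟨Equiv.ofBijective g hbij, fun i j => ?_⟩
  constructor
  · intro hne
    obtain ⟨j₀, _, huniq⟩ := hM.1 i
    have h1 := huniq j hne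
    have h2 := huniq (g i) (hgne i)
    rw [h1, ← h2]; rfl
  · intro hj; subst hj; exact hgne i

lemma monomial_perm_mul {n : ℕ} {F : Type*} [Field F]
    {M N : Matrix (Fin n) (Fin n) F} {σ τ : Equiv.Perm (Fin n)}
    (hM : ∀ i j, M i j ≠ 0 ↔ j = σ i) (hN : ∀ i j, N i j ≠ 0 ↔ j = τ i) :
    ∀ i j, (M * N) i j ≠ 0 ↔ j = τ (σ i) := by
  intro i j
  have hsum : (M * N) i j = M i (σ i) * N (σ i) j := by
    rw [Matrix.mul_apply]
    refine Finset.sum_eq_single (σ i) ?_ ?_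
    · intro k _ hk
      have : M i k = 0 := by
        by_contra hne
        exact hk ((hM i k).mp hne)
      rw [this, zero_mul]
    · intro hmem; exact absurd (Finset.mem_univ _) hmem
  rw [hsum]
  have hMσ : M i (σ i) ≠ 0 := (hM i (σ i)).mpr rfl
  constructor
  · intro hne
    have : N (σ i) j ≠ 0 := fun h => hne (by rw [h, mul_zero])
    exact (hN (σ i) j).mp this
  · intro hj
    exact mul_ne_zero hMσ ((hN (σ i) j).mpr hj)

lemma monomial_perm_pow {n : ℕ} {F : Type*} [Field F]
    {M : Matrix (Fin n) (Fin n) F} {σ : Equiv.Perm (Fin n)}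
    (hM : ∀ i j, M i j ≠ 0 ↔ j = σ i) :
    ∀ k : ℕ, ∀ i j, (M ^ k) i j ≠ 0 ↔ j = (σ ^ k) i := by
  intro k
  induction k with
  | zero =>
    intro i j
    rw [pow_zero, pow_zero]
    simp only [Matrix.one_apply, Equiv.Perm.coe_one, id_eq]
    by_cases hij : i = j
    · subst hij; simp
    · simp [hij, Ne.symm hij]
  | succ k ih =>
    intro i j
    have hmul := monomial_perm_mul ih hM i j
    rw [pow_succ M k, hmul]
    have : (σ ^ (k + 1)) i = σ ((σ ^ k) i) := by
      rw [pow_succ' σ k]; rfl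
    rw [this]

lemma diagonal_comm {n : ℕ} {F : Type*} [Field F]
    {A B : Matrix (Fin n) (Fin n) F}
    (hA : ∀ i j, A i j ≠ 0 → j = i) (hB : ∀ i j, B i j ≠ 0 → j = i) :
    A * B = B * A := by
  classical
  ext i j
  have hAe : ∀ i j, j ≠ i → A i j = 0 := fun i j h => by
    by_contra hne; exact h (hA i j hne)
  have hBe : ∀ i j, j ≠ i → B i j = 0 := fun i j h => by
    by_contra hne; exact h (hB i j hne)
  have h1 : (A * B) i j = A i i * B i j := by
    rw [Matrix.mul_apply]
    refine Finset.sum_eq_single i (fun k _ hk => by rw [hAe i k hk, zero_mul])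
      (fun h => absurd (Finset.mem_univ _) h)
  have h2 : (B * A) i j = B i i * A i j := by
    rw [Matrix.mul_apply]
    refine Finset.sum_eq_single i (fun k _ hk => by rw [hBe i k hk, zero_mul])
      (fun h => absurd (Finset.mem_univ _) h)
  rw [h1, h2]
  by_cases hij : j = i
  · subst hij; exact mul_comm _ _
  · rw [hAe i j hij, hBe i j hij, mul_zero, mul_zero]

/-- If `G ≤ GL(n, F)` is conjugate to a group of monomial matrices and `e` is the exponent
of `Sym(n)`, then the `e`-th powers of elements of `G` commute. -/
theorem pow_exponent_symm_commute_of_monomial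
    {n : ℕ} {F : Type*} [Field F]
    (G : Subgroup (Matrix (Fin n) (Fin n) F)ˣ)
    (x : (Matrix (Fin n) (Fin n) F)ˣ)
    (hmon : ∀ g ∈ G,
      IsMonomialMatrix ((x * g * x⁻¹ : (Matrix (Fin n) (Fin n) F)ˣ) : Matrix (Fin n) (Fin n) F)) :
    ∀ g ∈ G, ∀ h ∈ G,
      g ^ Monoid.exponent (Equiv.Perm (Fin n)) * h ^ Monoid.exponent (Equiv.Perm (Fin n)) =
        h ^ Monoid.exponent (Equiv.Perm (Fin n)) * g ^ Monoid.exponent (Equiv.Perm (Fin n)) := by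
  intro g hg h hh
  set e := Monoid.exponent (Equiv.Perm (Fin n)) with he
  obtain ⟨σ, hσ⟩ := (hmon g hg).exists_perm
  obtain ⟨τ, hτ⟩ := (hmon h hh).exists_perm
  have hσe : σ ^ e = 1 := Monoid.pow_exponent_eq_one σ
  have hτe : τ ^ e = 1 := Monoid.pow_exponent_eq_one τ
  -- the e-th powers of the conjugated matrices are diagonal
  have hgd : ∀ i j, (((x * g * x⁻¹ : (Matrix (Fin n) (Fin n) F)ˣ) :
      Matrix (Fin n) (Fin n) F) ^ e) i j ≠ 0 → j = i := by
    intro i j hne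
    have := (monomial_perm_pow hσ e i j).mp hne
    rw [hσe] at this; simpa using this
  have hhd : ∀ i j, (((x * h * x⁻¹ : (Matrix (Fin n) (Fin n) F)ˣ) :
      Matrix (Fin n) (Fin n) F) ^ e) i j ≠ 0 → j = i := by
    intro i j hne
    have := (monomial_perm_pow hτ e i j).mp hne
    rw [hτe] at this; simpa using this
  have hcomm : (x * g * x⁻¹) ^ e * (x * h * x⁻¹) ^ e
      = (x * h * x⁻¹) ^ e * (x * g * x⁻¹) ^ e := by
    apply Units.ext
    rw [Units.val_mul, Units.val_mul, Units.val_pow_eq_pow_val, Units.val_pow_eq_pow_val]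
    exact diagonal_comm hgd hhd
  have hconj : ∀ a : (Matrix (Fin n) (Fin n) F)ˣ, (x * a * x⁻¹) ^ e = x * a ^ e * x⁻¹ := by
    intro a
    induction e with
    | zero => simp
    | succ k ih =>
      rw [pow_succ, pow_succ, ih]
      group
  rw [hconj, hconj] at hcomm
  have h1 : x * g ^ e * x⁻¹ * (x * h ^ e * x⁻¹) = x * (g ^ e * h ^ e) * x⁻¹ := by group
  have h2 : x * h ^ e * x⁻¹ * (x * g ^ e * x⁻¹) = x * (h ^ e * g ^ e) * x⁻¹ := by group
  rw [h1, h2] at hcomm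
  exact mul_left_cancel (mul_right_cancel hcomm)
end

section
/- Let ℙ be an algebraic number field of degree m over ℚ with ring of integers 𝒪, and let H ≤ SL(n,𝒪). Suppose Tr([H,H]), the subring of 𝒪 generated by 1 and the traces of elements of the commutator subgroup [H,H], is a complete ℤ-submodule of 𝒪 with ℤ-basis B = (b₁,…,b_m). Let A = (a₁,…,a_m) be a ℤ-basis of 𝒪 and let w be the integer change-of-basis matrix expressing B in terms of A. Then for every maximal ideal I of 𝒪 with det(w)² Δ(A) ∉ I, where Δ(A) = det((Tr_{ℙ/ℚ}(a_i a_j))_{i,j}), the reduction φ_I(H) is not a subfield (C5-) group of SL(n, 𝒪/I); indeed φ_I maps Tr([H,H]) onto all of 𝒪/I. -/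
open Matrix

set_option synthInstance.maxHeartbeats 400000
set_option maxHeartbeats 1000000

noncomputable section

/-- `G ≤ SL(n, F)` is a subfield (`C5`-) group: there is a proper subfield `E` of `F`
and `x ∈ GL(n, F)` such that every element of `xGx⁻¹` is a scalar multiple of a matrix
with all entries in `E`. -/
def IsSubfieldGroup {n : ℕ} {F : Type*} [CommRing F]
    (G : Subgroup (Matrix.SpecialLinearGroup (Fin n) F)) : Prop :=
  ∃ E : Subring F, E ≠ ⊤ ∧ (∀ y ∈ E, ∀ z : F, y * z = 1 → z ∈ E) ∧
    ∃ x : (Matrix (Fin n) (Fin n) F)ˣ,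
      ∀ g ∈ G, ∃ c : F, ∃ m : Matrix (Fin n) (Fin n) F,
        (∀ i j, m i j ∈ E) ∧
        (x : Matrix (Fin n) (Fin n) F) * (g : Matrix (Fin n) (Fin n) F) *
          ((x⁻¹ : (Matrix (Fin n) (Fin n) F)ˣ) : Matrix (Fin n) (Fin n) F) = c • m

/-- `Tr(S)`: the subring of the coefficient ring generated by (1 and) the traces of the
elements of a matrix group `S`. -/
def trRing {n : ℕ} {A : Type*} [CommRing A]
    (S : Subgroup (Matrix.SpecialLinearGroup (Fin n) A)) : Subring A :=
  Subring.closure {t : A | ∃ g ∈ S, Matrix.trace ((g : Matrix (Fin n) (Fin n) A)) = t}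

/-!
If `x G x⁻¹` consists of scalar multiples of matrices over a proper subfield `E`, then, the
scalars being central, every commutator of `x G x⁻¹` lies in `GL(n, E)`, so all traces of
`[G, G]` lie in `E` and `Tr([G, G]) ≠ ⊤`. On the other hand the adjugate of `w` gives
`det w • 𝒪 ⊆ span B ⊆ Tr([H, H])`, and `det w` is invertible modulo `I` because
`det(w)² Δ(A) ∉ I`; so `Tr([H, H])` maps onto `𝒪/I`. Reduction modulo `I` commutes with traces
and commutators, hence `φ_I(H)` cannot be a subfield group.
-/

open scoped commutatorElement

theorem commutatorElement_mul_mul_of_mem_center {G : Type*} [Group G] {z w : G}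
    (hz : z ∈ Subgroup.center G) (hw : w ∈ Subgroup.center G) (g h : G) :
    ⁅z * g, w * h⁆ = ⁅g, h⁆ := by
  rw [Subgroup.mem_center_iff] at hz hw
  rw [commutatorElement_mul_left_eq_conj_mul, commutatorElement_mul_right_eq_mul_conj,
    (commutatorElement_eq_one_iff_mul_comm.mpr (hz _).symm),
    (commutatorElement_eq_one_iff_mul_comm.mpr (hw g)), one_mul, mul_one, ← hw, ← hz,
    mul_inv_cancel_right, mul_inv_cancel_right]

theorem Subgroup.commutator_le_of_forall_eq_center_mul {G : Type*} [Group G]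
    {H K : Subgroup G} (h : ∀ g ∈ H, ∃ z ∈ Subgroup.center G, ∃ k ∈ K, g = z * k) :
    ⁅H, H⁆ ≤ K := by
  rw [Subgroup.commutator_le]
  intro g₁ hg₁ g₂ hg₂
  obtain ⟨z₁, hz₁, k₁, hk₁, rfl⟩ := h g₁ hg₁
  obtain ⟨z₂, hz₂, k₂, hk₂, rfl⟩ := h g₂ hg₂
  rw [commutatorElement_mul_mul_of_mem_center hz₁ hz₂, commutatorElement_def]
  exact mul_mem (mul_mem (mul_mem hk₁ hk₂) (inv_mem hk₁)) (inv_mem hk₂)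

section GeneralLinearGroup

variable {ι F : Type*} [Fintype ι] [DecidableEq ι] [CommRing F]

/-- `GL(ι, E)` as a subgroup of `GL(ι, F)`. -/
def Subring.generalLinearGroup (E : Subring F) : Subgroup (GL ι F) :=
  (Units.map (E.subtype.mapMatrix : Matrix ι ι E →+* Matrix ι ι F).toMonoidHom).range

theorem Subring.trace_mem_of_mem_generalLinearGroup {E : Subring F} {g : GL ι F}
    (hg : g ∈ E.generalLinearGroup) : trace (g : Matrix ι ι F) ∈ E := by
  obtain ⟨u, rfl⟩ := hg
  rw [Units.coe_map, RingHom.toMonoidHom_eq_coe, MonoidHom.coe_coe, RingHom.mapMatrix_apply,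
    ← AddMonoidHom.map_trace E.subtype]
  exact (trace (u : Matrix ι ι E)).2

theorem units_map_algebraMap_mem_center (c : Fˣ) :
    Units.map (algebraMap F (Matrix ι ι F)).toMonoidHom c ∈ Subgroup.center (GL ι F) := by
  rw [Subgroup.mem_center_iff]
  intro g
  ext : 1
  simp [Algebra.commutes]

theorem Subring.exists_eq_center_mul_of_det_eq_one {E : Subring F}
    (hEinv : ∀ y ∈ E, ∀ z : F, y * z = 1 → z ∈ E) {g : GL ι F}
    (hdet : (g : Matrix ι ι F).det = 1)
    {c : F} {m : Matrix ι ι F} (hm : ∀ i j, m i j ∈ E) (hg : (g : Matrix ι ι F) = c • m) :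
    ∃ z ∈ Subgroup.center (GL ι F), ∃ k ∈ E.generalLinearGroup, g = z * k := by
  rcases isEmpty_or_nonempty ι with hι | hι
  · exact ⟨1, one_mem _, 1, one_mem _, Subsingleton.elim _ _⟩
  have hcm : c ^ Fintype.card ι * m.det = 1 := by rw [← det_smul, ← hg, hdet]
  have hc : IsUnit c :=
    (isUnit_pow_iff Fintype.card_ne_zero).mp (IsUnit.of_mul_eq_one _ hcm)
  let m' : Matrix ι ι E := fun i j => ⟨m i j, hm i j⟩
  have hm' : E.subtype.mapMatrix m' = m := rfl
  have hdet' : (m'.det : F) = m.det := by rw [← hm', ← RingHom.map_det]; rfl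
  have hcE : c ^ Fintype.card ι ∈ E := hEinv _ (hdet' ▸ m'.det.2) _ (by rw [mul_comm, hcm])
  have hm'det : IsUnit m'.det := by
    refine IsUnit.of_mul_eq_one ⟨_, hcE⟩ (Subtype.ext ?_)
    change (m'.det : F) * c ^ Fintype.card ι = 1
    rw [hdet', mul_comm, hcm]
  refine ⟨Units.map _ hc.unit, units_map_algebraMap_mem_center _,
    Units.map _ ((isUnit_iff_isUnit_det _).mpr hm'det).unit, ⟨_, rfl⟩, ?_⟩
  ext : 1
  simp [hg, hm', Algebra.smul_def]

end GeneralLinearGroup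

theorem IsSubfieldGroup.trRing_commutator_ne_top {n : ℕ} {F : Type*} [CommRing F]
    {G : Subgroup (Matrix.SpecialLinearGroup (Fin n) F)} (hG : IsSubfieldGroup G) :
    trRing ⁅G, G⁆ ≠ ⊤ := by
  obtain ⟨E, hEtop, hEinv, x, hx⟩ := hG
  let φ : Matrix.SpecialLinearGroup (Fin n) F →* GL (Fin n) F :=
    (MulAut.conj x).toMonoidHom.comp Matrix.SpecialLinearGroup.toGL
  have hφ : ∀ g, (φ g : Matrix (Fin n) (Fin n) F) = x * g * (x⁻¹ : GL (Fin n) F) :=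
    fun _ => rfl
  have hle : ⁅G, G⁆.map φ ≤ E.generalLinearGroup := by
    rw [Subgroup.map_commutator]
    refine Subgroup.commutator_le_of_forall_eq_center_mul ?_
    rintro _ ⟨g, hg, rfl⟩
    obtain ⟨c, m, hm, hcm⟩ := hx g hg
    exact E.exists_eq_center_mul_of_det_eq_one hEinv (by rw [hφ, det_units_conj, g.2]) hm hcm
  refine fun htop => hEtop (eq_top_iff.mpr (htop.symm.le.trans ?_))
  rw [trRing, Subring.closure_le]
  rintro _ ⟨g, hg, rfl⟩
  have := E.trace_mem_of_mem_generalLinearGroup (hle ⟨g, hg, rfl⟩)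
  rwa [hφ, trace_units_conj] at this

theorem trRing_map {n : ℕ} {A B : Type*} [CommRing A] [CommRing B] (f : A →+* B)
    (G : Subgroup (Matrix.SpecialLinearGroup (Fin n) A)) :
    trRing (G.map (Matrix.SpecialLinearGroup.map f)) = (trRing G).map f := by
  rw [trRing, trRing, RingHom.map_closure]
  congr 1
  ext t
  simp [Matrix.SpecialLinearGroup.map_apply_coe, AddMonoidHom.map_trace]

theorem smul_mem_span_of_eq_sum_smul {R M ι : Type*} [CommRing R] [AddCommGroup M] [Module R M]
    [Fintype ι] [DecidableEq ι] {a b : ι → M} {w : Matrix ι ι R}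
    (hw : ∀ i, b i = ∑ j, w i j • a j) (ha : Submodule.span R (Set.range a) = ⊤) (x : M) :
    w.det • x ∈ Submodule.span R (Set.range b) := by
  have hadj : ∀ i, w.det • a i = ∑ j, w.adjugate i j • b j := fun i => by
    calc w.det • a i = ∑ k, (w.adjugate * w) i k • a k := by
          simp [adjugate_mul, Matrix.one_apply, ite_smul]
      _ = ∑ j, w.adjugate i j • b j := by
          simp_rw [hw, Finset.smul_sum, smul_smul, Matrix.mul_apply, Finset.sum_smul]
          exact Finset.sum_comm
  have hle : Submodule.span R (Set.range a) ≤
      (Submodule.span R (Set.range b)).comap (w.det • LinearMap.id) := by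
    refine Submodule.span_le.mpr (Set.range_subset_iff.mpr fun i => ?_)
    simp only [SetLike.mem_coe, Submodule.mem_comap, LinearMap.smul_apply, LinearMap.id_coe,
      id_eq, hadj]
    exact Submodule.sum_mem _ fun j _ => Submodule.smul_mem _ _ (Submodule.subset_span ⟨j, rfl⟩)
  rw [ha] at hle
  exact hle Submodule.mem_top

theorem Ideal.Quotient.exists_mem_mk_eq_of_forall_mul_mem {R : Type*} [CommRing R]
    {I : Ideal R} [I.IsMaximal] {S : Set R} {c : R} (hc : c ∉ I) (hS : ∀ x, c * x ∈ S)
    (y : R ⧸ I) : ∃ t ∈ S, Ideal.Quotient.mk I t = y := by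
  let := Ideal.Quotient.field I
  have hc' : Ideal.Quotient.mk I c ≠ 0 := by rwa [Ne, Ideal.Quotient.eq_zero_iff_mem]
  obtain ⟨x, hx⟩ := Ideal.Quotient.mk_surjective ((Ideal.Quotient.mk I c)⁻¹ * y)
  exact ⟨c * x, hS x, by rw [map_mul, hx, mul_inv_cancel_left₀ hc']⟩

theorem reduction_not_subfieldGroup_of_discriminant_not_mem_general
    (P : Type*) [Field P] [NumberField P] (n : ℕ)
    (H : Subgroup (Matrix.SpecialLinearGroup (Fin n) ↥(integralClosure ℤ P)))
    (b : Fin (Module.finrank ℚ P) → ↥(integralClosure ℤ P))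
    (hbmem : ∀ i, b i ∈ trRing ⁅H, H⁆)
    (a : Fin (Module.finrank ℚ P) → ↥(integralClosure ℤ P))
    (haspan : Submodule.span ℤ (Set.range a) = ⊤)
    (w : Matrix (Fin (Module.finrank ℚ P)) (Fin (Module.finrank ℚ P)) ℤ)
    (hw : ∀ i, b i = ∑ j, w i j • a j)
    (I : Ideal ↥(integralClosure ℤ P)) (hI : I.IsMaximal)
    (hΔ : ((w.det ^ 2 *
        (Matrix.of fun i j =>
          Algebra.trace ℤ ↥(integralClosure ℤ P) (a i * a j)).det : ℤ) :
      ↥(integralClosure ℤ P)) ∉ I) :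
    ¬ IsSubfieldGroup (H.map (Matrix.SpecialLinearGroup.map (Ideal.Quotient.mk I))) ∧
    ∀ y : ↥(integralClosure ℤ P) ⧸ I,
      ∃ t ∈ trRing ⁅H, H⁆, Ideal.Quotient.mk I t = y := by
  have hdet : (w.det : integralClosure ℤ P) ∉ I := fun h => hΔ <| by
    rw [Int.cast_mul, Int.cast_pow]
    exact I.mul_mem_right _ (I.pow_mem_of_mem h 2 two_pos)
  have hspan :
      Submodule.span ℤ (Set.range b) ≤ (trRing ⁅H, H⁆).toAddSubgroup.toIntSubmodule :=
    Submodule.span_le.mpr (Set.range_subset_iff.mpr hbmem)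
  have hsurj :
      ∀ y : integralClosure ℤ P ⧸ I, ∃ t ∈ trRing ⁅H, H⁆, Ideal.Quotient.mk I t = y :=
    Ideal.Quotient.exists_mem_mk_eq_of_forall_mul_mem hdet fun x =>
      zsmul_eq_mul x w.det ▸ hspan (smul_mem_span_of_eq_sum_smul hw haspan x)
  refine ⟨fun hsub => hsub.trRing_commutator_ne_top ?_, hsurj⟩
  rw [← Subgroup.map_commutator, trRing_map, eq_top_iff]
  rintro y -
  obtain ⟨t, ht, rfl⟩ := hsurj y
  exact Subring.mem_map.mpr ⟨t, ht, rfl⟩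

/-- Suppose `Tr([H,H])` is a complete `ℤ`-submodule of `𝒪` with `ℤ`-basis `B`, and `w` is
the change-of-basis matrix from `B` to a `ℤ`-basis `A` of `𝒪`. Then for every maximal
ideal `I` of `𝒪` with `det(w)² Δ(A) ∉ I`, the reduction of `H` mod `I` is not a subfield
(`C5`-) group; indeed `Tr([H,H])` maps onto all of `𝒪/I`. -/
theorem reduction_not_subfieldGroup_of_discriminant_not_mem
    (P : Type*) [Field P] [NumberField P] (n : ℕ)
    (H : Subgroup (Matrix.SpecialLinearGroup (Fin n) ↥(integralClosure ℤ P)))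
    (b : Fin (Module.finrank ℚ P) → ↥(integralClosure ℤ P))
    (hbmem : ∀ i, b i ∈ trRing ⁅H, H⁆)
    (hbindep : LinearIndependent ℤ b)
    (hbspan : ∀ t ∈ trRing ⁅H, H⁆, t ∈ Submodule.span ℤ (Set.range b))
    (a : Fin (Module.finrank ℚ P) → ↥(integralClosure ℤ P))
    (haindep : LinearIndependent ℤ a)
    (haspan : Submodule.span ℤ (Set.range a) = ⊤)
    (w : Matrix (Fin (Module.finrank ℚ P)) (Fin (Module.finrank ℚ P)) ℤ)
    (hw : ∀ i, b i = ∑ j, w i j • a j)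
    (I : Ideal ↥(integralClosure ℤ P)) (hI : I.IsMaximal)
    (hΔ : ((w.det ^ 2 *
        (Matrix.of fun i j =>
          Algebra.trace ℤ ↥(integralClosure ℤ P) (a i * a j)).det : ℤ) :
      ↥(integralClosure ℤ P)) ∉ I) :
    ¬ IsSubfieldGroup (H.map (Matrix.SpecialLinearGroup.map (Ideal.Quotient.mk I))) ∧
    ∀ y : ↥(integralClosure ℤ P) ⧸ I,
      ∃ t ∈ trRing ⁅H, H⁆, Ideal.Quotient.mk I t = y :=
  reduction_not_subfieldGroup_of_discriminant_not_mem_general P n H b hbmem a haspan w hw I hI hΔ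
end
end
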